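/- arXiv:math/0411136 — 4 statements merged into one kernel-verified Lean document; each statement's English description precedes it below -/
import Mathlib

section
/- Noncommutative Chu–Vandermonde summation of type I: Let A and C be elements of a unit ring R and let n be a nonnegative integer. Then Σ_{k=0}^{n} ⌈A, −nI; C, I; I⌋_k = ⌈C−A; C; I⌋_n, i.e. the terminating noncommutative hypergeometric series of type I, ₂F₁⌈A, −nI; C; I⌋, equals the type I noncommutative shifted factorial ⌈C−A; C⌋_n = ∏_{j=1}^{n} (C+(n−j)I)^{−1}(C−A+(n−j)I). -/
def opr {R : Type*} [Ring R] (n : ℕ) (f : ℕ → R) : R :=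
  ((List.range n).map f).prod

section
variable {R : Type*} [Ring R]

lemma opr_zero (f : ℕ → R) : opr 0 f = 1 := rfl

lemma opr_succ (n : ℕ) (f : ℕ → R) : opr (n+1) f = opr n f * f n := by
  simp [opr, List.range_succ]

lemma opr_succ' (n : ℕ) (f : ℕ → R) : opr (n+1) f = f 0 * opr n (fun j => f (j+1)) := by
  simp [opr, List.range_succ_eq_map, Function.comp_def, Nat.succ_eq_add_one]

noncomputable def P (A C : R) : ℕ → R
  | 0 => 1
  | k+1 => (Ring.inverse (C + (k : R)) * (A + (k : R))) * P A C k

lemma P_eq_opr (A C : R) (k : ℕ) :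
    P A C k = opr k (fun j =>
      Ring.inverse (C + ((k - 1 - j : ℕ) : R)) * (A + ((k - 1 - j : ℕ) : R))) := by
  induction k with
  | zero => rfl
  | succ k ih =>
      rw [opr_succ']
      simp only [Nat.succ_sub_one, Nat.sub_zero]
      show P A C (k+1) = _
      rw [P]
      congr 1
      rw [ih]
      congr 1
      funext j
      rw [show k - (j + 1) = k - 1 - j from by omega]

lemma P_right (A C : R) (k : ℕ) :
    P A C (k+1) = P (A+1) (C+1) k * (Ring.inverse C * A) := by
  induction k with
  | zero => simp [P]
  | succ k ih =>
      have hc : (C + ((k+1 : ℕ) : R)) = (C + 1) + (k : R) := by push_cast; abel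
      have ha : (A + ((k+1 : ℕ) : R)) = (A + 1) + (k : R) := by push_cast; abel
      rw [show P A C (k+1+1)
            = (Ring.inverse (C + ((k+1:ℕ) : R)) * (A + ((k+1:ℕ):R))) * P A C (k+1) from
          by rw [P],
        ih,
        show P (A+1) (C+1) (k+1)
            = (Ring.inverse ((C+1) + (k : R)) * ((A+1) + (k : R))) * P (A+1) (C+1) k from
          by rw [P],
        hc, ha]
      simp only [mul_assoc]

lemma keyComm (B C : R) (hC : IsUnit C) :
    (C - B) * (Ring.inverse C * B) = B * (Ring.inverse C * (C - B)) := by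
  have h1 : C * Ring.inverse C = 1 := Ring.mul_inverse_cancel C hC
  have h2 : Ring.inverse C * C = 1 := Ring.inverse_mul_cancel C hC
  calc (C - B) * (Ring.inverse C * B)
      = C * Ring.inverse C * B - B * Ring.inverse C * B := by noncomm_ring
    _ = B - B * Ring.inverse C * B := by rw [h1, one_mul]
    _ = B * (Ring.inverse C * C) - B * Ring.inverse C * B := by rw [h2, mul_one]
    _ = B * (Ring.inverse C * (C - B)) := by noncomm_ring

lemma lemL (n : ℕ) : ∀ B C : R, (∀ m : ℕ, m ≤ n → IsUnit (C + (m : R))) →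
    P B C n = P (B+1) (C+1) n * (Ring.inverse C * B)
      + P B (C+1) n * (Ring.inverse C * (C - B)) := by
  induction n with
  | zero =>
      intro B C hC
      have hc : IsUnit C := by simpa using hC 0 le_rfl
      simp only [P, one_mul]
      rw [← mul_add, show B + (C - B) = C from by abel, Ring.inverse_mul_cancel C hc]
  | succ n ih =>
      intro B C hC
      have hc : IsUnit C := by simpa using hC 0 (Nat.zero_le _)
      have hC' : ∀ m : ℕ, m ≤ n → IsUnit ((C + 1) + (m : R)) := by
        intro m hm
        have h := hC (m+1) (by omega)
        have e : C + ((m+1 : ℕ) : R) = (C + 1) + (m : R) := by push_cast; abel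
        rwa [e] at h
      rw [P_right B C n, P_right (B+1) (C+1) n, P_right B (C+1) n, ih (B+1) (C+1) hC']
      rw [show (B+1+1 : R) = B+2 from by norm_num [add_assoc],
        show (C+1+1 : R) = C+2 from by norm_num [add_assoc],
        show (C+1-(B+1) : R) = C - B from by abel]
      rw [add_mul]
      simp only [mul_assoc]
      rw [keyComm B C hc]

lemma core (n : ℕ) : ∀ A C : R, (∀ m : ℕ, m < n → IsUnit (C + (m : R))) →
    (∑ k ∈ Finset.range (n+1), ((-1 : ℤ)^k * (n.choose k : ℤ)) • P A C k)
      = P (C - A) C n := by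
  induction n with
  | zero => intro A C _; simp [P]
  | succ n ih =>
      intro A C hC
      have hC1 : ∀ m : ℕ, m < n → IsUnit (C + (m : R)) := fun m hm => hC m (by omega)
      have hC2 : ∀ m : ℕ, m < n → IsUnit ((C+1) + (m : R)) := by
        intro m hm
        have h := hC (m+1) (by omega)
        have e : C + ((m+1 : ℕ) : R) = (C + 1) + (m : R) := by push_cast; abel
        rwa [e] at h
      have hCle : ∀ m : ℕ, m ≤ n → IsUnit (C + (m : R)) := fun m hm => hC m (by omega)
      rw [Finset.sum_range_succ']
      have key : ∀ j ∈ Finset.range (n+1),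
          ((-1:ℤ)^(j+1) * ((n+1).choose (j+1) : ℤ)) • P A C (j+1)
            = ((-1:ℤ)^(j+1) * (n.choose (j+1) : ℤ)) • P A C (j+1)
              - ((-1:ℤ)^j * (n.choose j : ℤ)) • P A C (j+1) := by
        intro j _
        rw [← sub_smul]
        congr 1
        rw [Nat.choose_succ_succ]
        push_cast
        ring
      rw [Finset.sum_congr rfl key, Finset.sum_sub_distrib]
      have h1 : (∑ j ∈ Finset.range (n+1), ((-1:ℤ)^(j+1) * (n.choose (j+1) : ℤ)) • P A C (j+1))
          + ((-1:ℤ)^0 * ((n+1).choose 0 : ℤ)) • P A C 0 = P (C - A) C n := by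
        rw [show ((-1:ℤ)^0 * ((n+1).choose 0 : ℤ)) = ((-1:ℤ)^0 * ((n).choose 0 : ℤ)) from by
            norm_num,
          ← Finset.sum_range_succ' (fun k => ((-1:ℤ)^k * (n.choose k : ℤ)) • P A C k) (n+1),
          Finset.sum_range_succ]
        simp only [Nat.choose_succ_self, Nat.cast_zero, mul_zero, zero_smul, add_zero]
        exact ih A C hC1
      have h2 : (∑ j ∈ Finset.range (n+1), ((-1:ℤ)^j * (n.choose j : ℤ)) • P A C (j+1))
          = P (C - A) (C+1) n * (Ring.inverse C * A) := by
        have e : ∀ j ∈ Finset.range (n+1),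
            ((-1:ℤ)^j * (n.choose j : ℤ)) • P A C (j+1)
              = (((-1:ℤ)^j * (n.choose j : ℤ)) • P (A+1) (C+1) j) * (Ring.inverse C * A) := by
          intro j _
          rw [P_right, smul_mul_assoc]
        rw [Finset.sum_congr rfl e, ← Finset.sum_mul, ih (A+1) (C+1) hC2,
          show (C+1-(A+1) : R) = C - A from by abel]
      have h3 : P (C - A) C (n+1)
          = P (C - A) C n - P (C - A) (C+1) n * (Ring.inverse C * A) := by
        rw [P_right, lemL n (C - A) C hCle,
          show C - (C - A) = A from by abel]
        abel
      rw [h3, ← h1, ← h2]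
      abel
end

section
variable {R : Type*} [Ring R]

lemma commute_ringInverse {a : R} (h : ∀ y : R, Commute a y) (x : R) :
    Commute x (Ring.inverse a) := by
  by_cases hu : IsUnit a
  · have hspec : (hu.unit : R) = a := hu.unit_spec
    rw [← hspec, Ring.inverse_unit]
    exact Commute.units_inv_right (by rw [hspec]; exact (h x).symm)
  · rw [Ring.inverse_non_unit a hu]
    exact Commute.zero_right x

lemma commute_opr (k : ℕ) (g : ℕ → R) (hg : ∀ j x, Commute x (g j)) (x : R) :
    Commute x (opr k g) := by
  apply Commute.list_prod_right
  intro y hy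
  simp only [List.mem_map, List.mem_range] at hy
  obtain ⟨j, _, rfl⟩ := hy
  exact hg j x

lemma opr_mul_central (k : ℕ) (f g : ℕ → R) (hg : ∀ j x, Commute x (g j)) :
    opr k (fun j => f j * g j) = opr k f * opr k g := by
  induction k with
  | zero => simp [opr_zero]
  | succ k ih =>
      rw [opr_succ, opr_succ, opr_succ, ih, mul_assoc, mul_assoc]
      congr 1
      rw [← mul_assoc, ← (commute_opr k g hg (f k)).eq, mul_assoc]

lemma scal (n : ℕ) (hI : ∀ m : ℕ, m < n → IsUnit ((1 : R) + (m : R))) :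
    ∀ k : ℕ, k ≤ n →
      opr k (fun j => Ring.inverse ((1 : R) + ((k - 1 - j : ℕ) : R))
          * (-(n : R) + ((k - 1 - j : ℕ) : R)))
        = (Int.cast ((-1 : ℤ)^k * (n.choose k : ℤ)) : R) := by
  intro k
  induction k with
  | zero => intro _; simp [opr_zero]
  | succ k ih =>
      intro hk
      have hk' : k ≤ n := by omega
      have hkn : k < n := by omega
      rw [opr_succ']
      have etail : (fun j => Ring.inverse ((1 : R) + ((k + 1 - 1 - (j+1) : ℕ) : R))
            * (-(n : R) + ((k + 1 - 1 - (j+1) : ℕ) : R)))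
          = (fun j => Ring.inverse ((1 : R) + ((k - 1 - j : ℕ) : R))
            * (-(n : R) + ((k - 1 - j : ℕ) : R))) := by
        funext j
        rw [show k + 1 - 1 - (j+1) = k - 1 - j from by omega]
      rw [etail, ih hk']
      have e0 : ((k + 1 - 1 - 0 : ℕ) : R) = (k : R) := by norm_num
      rw [e0]
      have hu : IsUnit ((1 : R) + (k : R)) := hI k hkn
      have e1 : (-(n : R) + (k : R)) = (Int.cast ((k : ℤ) - (n : ℤ)) : R) := by push_cast; abel
      have hz : ((n.choose (k+1) : ℤ)) * ((k : ℤ) + 1) = (n.choose k : ℤ) * ((n : ℤ) - k) := by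
        have h := Nat.choose_succ_right_eq n k
        have := congrArg (fun m : ℕ => (m : ℤ)) h
        push_cast [Nat.cast_sub hk'] at this
        linarith [this]
      have key : ((k : ℤ) - n) * ((-1 : ℤ)^k * (n.choose k : ℤ))
          = ((k : ℤ) + 1) * ((-1 : ℤ)^(k+1) * (n.choose (k+1) : ℤ)) := by
        have : (-1 : ℤ)^(k+1) = -(-1 : ℤ)^k := by ring
        rw [this]
        linear_combination ((-1 : ℤ)^k) * hz
      have ecast : (((((k : ℤ) + 1) : ℤ)) : R) = (1 : R) + (k : R) := by push_cast; abel
      calc Ring.inverse ((1:R) + (k:R)) * (-(n : R) + (k : R))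
            * (Int.cast ((-1 : ℤ)^k * (n.choose k : ℤ)) : R)
          = Ring.inverse ((1:R) + (k:R))
            * (Int.cast (((k : ℤ) - n) * ((-1 : ℤ)^k * (n.choose k : ℤ))) : R) := by
            rw [mul_assoc, e1, ← Int.cast_mul]
        _ = Ring.inverse ((1:R) + (k:R))
            * (Int.cast (((k : ℤ) + 1) * ((-1 : ℤ)^(k+1) * (n.choose (k+1) : ℤ))) : R) := by
            rw [key]
        _ = (Ring.inverse ((1:R) + (k:R)) * ((1:R) + (k:R)))
            * (Int.cast ((-1 : ℤ)^(k+1) * (n.choose (k+1) : ℤ)) : R) := by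
            rw [Int.cast_mul, ecast, mul_assoc]
        _ = (Int.cast ((-1 : ℤ)^(k+1) * (n.choose (k+1) : ℤ)) : R) := by
            rw [Ring.inverse_mul_cancel _ hu, one_mul]

end

/-- Noncommutative Chu–Vandermonde summation of type I:
`₂F₁⌈A, −nI; C; I⌋ = ⌈C−A; C⌋_n`. -/
theorem ncChuVandermondeI {R : Type*} [Ring R] (A C : R) (n : ℕ)
    (hC : ∀ m : ℕ, m < n → IsUnit (C + (m : R)))
    (hI : ∀ m : ℕ, m < n → IsUnit ((1 : R) + (m : R))) :
    (∑ k ∈ Finset.range (n + 1),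
      opr k (fun j =>
        Ring.inverse (C + ((k - 1 - j : ℕ) : R)) * (A + ((k - 1 - j : ℕ) : R)) *
        (Ring.inverse ((1 : R) + ((k - 1 - j : ℕ) : R)) *
          (-(n : R) + ((k - 1 - j : ℕ) : R))))) =
    opr n (fun j =>
      Ring.inverse (C + ((n - 1 - j : ℕ) : R)) * (C - A + ((n - 1 - j : ℕ) : R))) := by
  have hterm : ∀ k ∈ Finset.range (n+1),
      opr k (fun j =>
        Ring.inverse (C + ((k - 1 - j : ℕ) : R)) * (A + ((k - 1 - j : ℕ) : R)) *
        (Ring.inverse ((1 : R) + ((k - 1 - j : ℕ) : R)) *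
          (-(n : R) + ((k - 1 - j : ℕ) : R))))
        = ((-1 : ℤ)^k * (n.choose k : ℤ)) • P A C k := by
    intro k hk
    have hkn : k ≤ n := by
      have := Finset.mem_range.mp hk
      omega
    have hg : ∀ j x, Commute x
        (Ring.inverse ((1 : R) + ((k - 1 - j : ℕ) : R))
          * (-(n : R) + ((k - 1 - j : ℕ) : R))) := by
      intro j x
      have h1 : Commute x (Ring.inverse ((1 : R) + ((k - 1 - j : ℕ) : R))) := by
        apply commute_ringInverse
        intro y
        exact (Commute.one_left y).add_left ((Nat.cast_commute (k - 1 - j) y))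
      have h2 : Commute x (-(n : R) + ((k - 1 - j : ℕ) : R)) :=
        ((Nat.cast_commute n x).symm.neg_right).add_right (Nat.cast_commute (k-1-j) x).symm
      exact h1.mul_right h2
    rw [opr_mul_central k _ _ hg, ← P_eq_opr, scal n hI k hkn, zsmul_eq_mul]
    exact ((Int.cast_commute ((-1 : ℤ)^k * (n.choose k : ℤ)) (P A C k)).eq).symm
  calc _ = ∑ k ∈ Finset.range (n+1), ((-1 : ℤ)^k * (n.choose k : ℤ)) • P A C k :=
        Finset.sum_congr rfl hterm
    _ = P (C - A) C n := core n A C hC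
    _ = _ := P_eq_opr (C - A) C n
end

section
/- Noncommutative q-Chu–Vandermonde summation of type I: Let A and C be elements of a unit ring R, let Q be an invertible element of R commuting with both A and C, and let n be a nonnegative integer. Then Σ_{k=0}^{n} ⌈A, Q^{−n}; C, Q; Q, Q⌋_k = ⌈CA^{−1}; C; Q, A⌋_n, i.e. the terminating noncommutative basic hypergeometric series of type I, ₂φ₁⌈A, Q^{−n}; C; Q, Q⌋, equals the type I noncommutative Q-shifted factorial ⌈CA^{−1}; C; Q, A⌋_n = ∏_{j=1}^{n} [(I−CQ^{n−j})^{−1}(I−CA^{−1}Q^{n−j})·A]. -/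
namespace NCQCV

variable {R : Type*} [Ring R]

theorem opr_zero (f : ℕ → R) : opr 0 f = 1 := rfl

theorem opr_succ (n : ℕ) (f : ℕ → R) : opr (n + 1) f = opr n f * f n := by
  simp [opr, List.range_succ]

theorem opr_succ' (n : ℕ) (f : ℕ → R) :
    opr (n + 1) f = f 0 * opr n (fun j => f (j + 1)) := by
  simp [opr, List.range_succ_eq_map, List.map_map]
  rfl

theorem commute_opr {x : R} {f : ℕ → R} (h : ∀ j, Commute x (f j)) (n : ℕ) :
    Commute x (opr n f) := by
  induction n with
  | zero => simpa [opr_zero] using Commute.one_right x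
  | succ n ih => rw [opr_succ]; exact ih.mul_right (h n)

theorem opr_mul_split (n : ℕ) (u v : ℕ → R) (h : ∀ i j, Commute (v i) (u j)) :
    opr n (fun j => u j * v j) = opr n u * opr n v := by
  induction n with
  | zero => simp [opr_zero]
  | succ n ih =>
      rw [opr_succ, opr_succ, opr_succ, ih]
      have h1 : Commute (opr n v) (u n) :=
        (commute_opr (f := v) (fun j => (h j n).symm) n).symm
      calc opr n u * opr n v * (u n * v n)
          = opr n u * (opr n v * u n) * v n := by noncomm_ring
        _ = opr n u * (u n * opr n v) * v n := by rw [h1.eq]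
        _ = opr n u * u n * (opr n v * v n) := by noncomm_ring

theorem commute_inverse {a b : R} (h : Commute a b) : Commute a (Ring.inverse b) := by
  by_cases hb : IsUnit b
  · obtain ⟨u, rfl⟩ := hb
    rw [Ring.inverse_unit]
    exact h.units_inv_right
  · rw [Ring.inverse_non_unit _ hb]
    exact Commute.zero_right a

/-- The double centralizer of `{Q}`: a commutative subring whose elements
commute with everything that commutes with `Q`. -/
def Tc (Q : R) : Subring R := Subring.centralizer (Subring.centralizer {Q} : Set R)

theorem Tc_comm {Q x y : R} (hx : x ∈ Tc Q) (hy : Commute Q y) : Commute x y := by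
  have hyc : y ∈ Subring.centralizer ({Q} : Set R) := by
    rw [Subring.mem_centralizer_iff]
    rintro g rfl
    exact hy.eq
  exact (hx y hyc).symm

theorem Q_mem (Q : R) : Q ∈ Tc Q := by
  rw [Tc, Subring.mem_centralizer_iff]
  intro g hg
  exact (hg Q rfl).symm

theorem inverse_mem {Q x : R} (hx : x ∈ Tc Q) : Ring.inverse x ∈ Tc Q := by
  rw [Tc, Subring.mem_centralizer_iff]
  intro g hg
  exact (commute_inverse (show Commute g x from (hx g hg))).eq

noncomputable instance (Q : R) : CommRing (Tc Q) :=
  { (inferInstance : Ring (Tc Q)) with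
    mul_comm := fun a b => by
      have hbQ : Commute Q (b : R) := ((Tc_comm b.2 (Commute.refl Q)).symm)
      have := (Tc_comm a.2 hbQ).eq
      exact Subtype.ext (by push_cast; exact this) }

noncomputable def qT (Q : R) : Tc Q := ⟨Q, Q_mem Q⟩

noncomputable def invT {Q : R} (x : Tc Q) : Tc Q := ⟨Ring.inverse (x : R), inverse_mem x.2⟩

@[simp] theorem coe_invT {Q : R} (x : Tc Q) : ((invT x : Tc Q) : R) = Ring.inverse (x : R) := rfl
@[simp] theorem coe_qT (Q : R) : ((qT Q : Tc Q) : R) = Q := rfl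

noncomputable def wT (Q : R) (n m : ℕ) : Tc Q :=
  invT (1 - qT Q * qT Q ^ m) * (1 - invT (qT Q ^ n) * qT Q ^ m) * qT Q

noncomputable def cT (Q : R) (n : ℕ) : ℕ → Tc Q
  | 0 => 1
  | k + 1 => cT Q n k * wT Q n k

theorem coe_wT (Q : R) (n m : ℕ) :
    ((wT Q n m : Tc Q) : R) =
      Ring.inverse (1 - Q * Q ^ m) * (1 - Ring.inverse (Q ^ n) * Q ^ m) * Q := by
  simp [wT]


section Scalar

variable (Q : R) (n : ℕ)

theorem delta (k : ℕ)
    (hE : (1 - qT Q * qT Q ^ k) * invT (1 - qT Q * qT Q ^ k) = 1) :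
    (1 - qT Q * qT Q ^ k) * cT Q n (k + 1) =
      (qT Q - invT (qT Q ^ n) * qT Q ^ (k + 1)) * cT Q n k := by
  show (1 - qT Q * qT Q ^ k) * (cT Q n k * wT Q n k) = _
  rw [wT]
  linear_combination (cT Q n k * (1 - invT (qT Q ^ n) * qT Q ^ k) * qT Q) * hE

theorem two (hu : qT Q ^ n * invT (qT Q ^ n) = 1)
    (hv : qT Q ^ (n + 1) * invT (qT Q ^ (n + 1)) = 1) :
    ∀ k : ℕ, (∀ m, m ≤ k → (1 - qT Q * qT Q ^ m) * invT (1 - qT Q * qT Q ^ m) = 1) →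
      qT Q ^ n * cT Q (n + 1) (k + 1) = qT Q ^ n * cT Q n (k + 1) - cT Q n k := by
  intro k
  induction k with
  | zero =>
      intro hE
      show qT Q ^ n * ((1 : Tc Q) * wT Q (n+1) 0) = qT Q ^ n * ((1 : Tc Q) * wT Q n 0) - 1
      rw [wT, wT]
      linear_combination (invT (1 - qT Q * qT Q ^ 0) * qT Q) * hu
        - invT (1 - qT Q * qT Q ^ 0) * hv - hE 0 (le_refl 0)
  | succ k ih =>
      intro hE
      have H1 := ih (fun m hm => hE m (hm.trans (Nat.le_succ k)))
      have H2 := delta Q n k (hE k (Nat.le_succ k))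
      have H3 := hE (k + 1) (le_refl _)
      set q := qT Q
      set u := invT (q ^ n)
      set v := invT (q ^ (n + 1))
      set E := invT (1 - q * q ^ (k + 1))
      set c' := cT Q (n + 1) (k + 1)
      set c1 := cT Q n (k + 1)
      set c0 := cT Q n k
      show q ^ n * (c' * wT Q (n+1) (k+1)) = q ^ n * (c1 * wT Q n (k+1)) - c1
      rw [wT, wT]
      linear_combination (E*q - E*q*u*q^k) * H1 + E * H2 - c1 * H3
        + (E*q*q^k*c' - E*q*q^k*c1 + E*q^2*q^k*c1) * hu + (-(E*q*q^k*c')) * hv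

theorem czero (hu : qT Q ^ n * invT (qT Q ^ n) = 1) : cT Q n (n + 1) = 0 := by
  have h0 : (1 : Tc Q) - invT (qT Q ^ n) * qT Q ^ n = 0 := by linear_combination - hu
  show cT Q n n * wT Q n n = 0
  rw [wT, h0]
  ring

theorem one' (hqi : qT Q * invT (qT Q) = 1) (hu : qT Q ^ n * invT (qT Q ^ n) = 1)
    (k : ℕ) (hE : ∀ m, m ≤ k → (1 - qT Q * qT Q ^ m) * invT (1 - qT Q * qT Q ^ m) = 1)
    (hv : qT Q ^ (n + 1) * invT (qT Q ^ (n + 1)) = 1) :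
    cT Q (n + 1) (k + 1) = invT (qT Q) ^ (k + 1) * cT Q n (k + 1) - invT (qT Q) ^ k * cT Q n k := by
  have h2 := two Q n hu hv k hE
  have hΔ := delta Q n k (hE k (le_refl k))
  set q := qT Q
  set qi := invT q
  set u := invT (q ^ n)
  set c' := cT Q (n + 1) (k + 1)
  set c1 := cT Q n (k + 1)
  set c0 := cT Q n k
  have hk1 : q ^ (k + 1) * qi ^ (k + 1) = 1 := by
    rw [← mul_pow, hqi, one_pow]
  have e1 : c' = c1 - u * c0 := by
    linear_combination u * h2 + (c1 - c') * hu
  have e2 : c1 - u * c0 = qi ^ (k + 1) * c1 - qi ^ k * c0 := by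
    linear_combination (-(qi^(k+1))) * hΔ + (u * c0 - c1) * hk1 + (-(qi^k * c0)) * hqi
  rw [e1, e2]

end Scalar


section Main

variable (A C Q : R)

noncomputable def Pf (k : ℕ) : R :=
  opr k (fun j => Ring.inverse (1 - C * Q ^ (k - 1 - j)) * (1 - A * Q ^ (k - 1 - j)))

noncomputable def Ff (n : ℕ) : R :=
  opr n (fun j =>
    Ring.inverse (1 - C * Q ^ (n - 1 - j)) * (1 - C * Ring.inverse A * Q ^ (n - 1 - j)) * A)

theorem Pf_zero : Pf A C Q 0 = 1 := rfl

theorem Pf_succ (k : ℕ) :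
    Pf A C Q (k + 1) = Ring.inverse (1 - C * Q ^ k) * (1 - A * Q ^ k) * Pf A C Q k := by
  rw [Pf, opr_succ']
  have h0 : k + 1 - 1 - 0 = k := by omega
  have h1 : ∀ j : ℕ, k + 1 - 1 - (j + 1) = k - 1 - j := fun j => by omega
  simp only [h0, h1]
  rfl

theorem Ff_succ (n : ℕ) :
    Ff A C Q (n + 1) =
      Ring.inverse (1 - C * Q ^ n) * (1 - C * Ring.inverse A * Q ^ n) * A * Ff A C Q n := by
  rw [Ff, opr_succ']
  have h0 : n + 1 - 1 - 0 = n := by omega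
  have h1 : ∀ j : ℕ, n + 1 - 1 - (j + 1) = n - 1 - j := fun j => by omega
  simp only [h0, h1]
  rfl

variable {A C Q}

theorem commQ_u (hQA : Q * A = A * Q) (hQC : Q * C = C * Q) (e : ℕ) :
    Commute Q (Ring.inverse (1 - C * Q ^ e) * (1 - A * Q ^ e)) := by
  have hc : Commute Q (1 - C * Q ^ e) :=
    (Commute.one_right Q).sub_right
      ((show Commute Q C from hQC).mul_right ((Commute.refl Q).pow_right e))
  have ha : Commute Q (1 - A * Q ^ e) :=
    (Commute.one_right Q).sub_right
      ((show Commute Q A from hQA).mul_right ((Commute.refl Q).pow_right e))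
  exact (commute_inverse hc).mul_right ha

theorem commQ_Pf (hQA : Q * A = A * Q) (hQC : Q * C = C * Q) (k : ℕ) :
    Commute Q (Pf A C Q k) :=
  commute_opr (fun _ => commQ_u hQA hQC _) k

theorem R1 (k : ℕ) (hCk : IsUnit (1 - C * Q ^ k)) :
    (1 - A * Q ^ k) * Pf A C Q k = (1 - C * Q ^ k) * Pf A C Q (k + 1) := by
  rw [Pf_succ, ← mul_assoc, ← mul_assoc, Ring.mul_inverse_cancel _ hCk, one_mul]

theorem APf (hQ : IsUnit Q) (hQA : Q * A = A * Q) (k : ℕ) (hCk : IsUnit (1 - C * Q ^ k)) :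
    A * Pf A C Q k =
      (Ring.inverse Q) ^ k * (Pf A C Q k - (1 - C * Q ^ k) * Pf A C Q (k + 1)) := by
  have h1 : A * (Q ^ k * Pf A C Q k) = Pf A C Q k - (1 - C * Q ^ k) * Pf A C Q (k + 1) := by
    rw [← R1 k hCk]
    noncomm_ring
  have hAQi : Commute (Ring.inverse Q) A :=
    (commute_inverse (show Commute A Q from hQA.symm)).symm
  have h2 : Ring.inverse Q ^ k * Q ^ k = 1 := by
    rw [Ring.inverse_pow, Ring.inverse_mul_cancel _ (hQ.pow k)]
  calc A * Pf A C Q k = A * (Ring.inverse Q ^ k * Q ^ k) * Pf A C Q k := by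
        rw [h2, mul_one]
    _ = Ring.inverse Q ^ k * (A * (Q ^ k * Pf A C Q k)) := by
        simp only [← mul_assoc]
        rw [show A * Ring.inverse Q ^ k = Ring.inverse Q ^ k * A from (hAQi.pow_left k).eq.symm]
    _ = _ := by rw [h1]


theorem opr_w (n : ℕ) : ∀ k : ℕ,
    opr k (fun j => Ring.inverse (1 - Q * Q ^ (k - 1 - j)) *
      (1 - Ring.inverse (Q ^ n) * Q ^ (k - 1 - j)) * Q) = ((cT Q n k : Tc Q) : R)
  | 0 => by simp [opr_zero, cT]
  | (k + 1) => by
      rw [opr_succ']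
      have h0 : k + 1 - 1 - 0 = k := by omega
      have h1 : ∀ j : ℕ, k + 1 - 1 - (j + 1) = k - 1 - j := fun j => by omega
      simp only [h0, h1]
      rw [opr_w n k, ← coe_wT Q n k, show cT Q n (k + 1) = cT Q n k * wT Q n k from rfl,
        mul_comm (cT Q n k) (wT Q n k)]
      push_cast
      ring

theorem term_eq (hQA : Q * A = A * Q) (hQC : Q * C = C * Q) (n k : ℕ) :
    opr k (fun j =>
      Ring.inverse (1 - C * Q ^ (k - 1 - j)) * (1 - A * Q ^ (k - 1 - j)) *
        (Ring.inverse (1 - Q * Q ^ (k - 1 - j)) *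
          (1 - Ring.inverse (Q ^ n) * Q ^ (k - 1 - j)) * Q)) =
      ((cT Q n k : Tc Q) : R) * Pf A C Q k := by
  have h := opr_mul_split k
    (fun j => Ring.inverse (1 - C * Q ^ (k - 1 - j)) * (1 - A * Q ^ (k - 1 - j)))
    (fun j => Ring.inverse (1 - Q * Q ^ (k - 1 - j)) *
      (1 - Ring.inverse (Q ^ n) * Q ^ (k - 1 - j)) * Q)
    (fun i j => by
      show Commute (Ring.inverse (1 - Q * Q ^ (k - 1 - i)) *
          (1 - Ring.inverse (Q ^ n) * Q ^ (k - 1 - i)) * Q)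
        (Ring.inverse (1 - C * Q ^ (k - 1 - j)) * (1 - A * Q ^ (k - 1 - j)))
      rw [← coe_wT Q n (k - 1 - i)]
      exact Tc_comm (wT Q n (k - 1 - i)).2 (commQ_u hQA hQC _))
  refine h.trans ?_
  rw [opr_w]
  exact (Tc_comm (cT Q n k).2 (commQ_Pf hQA hQC k)).eq.symm

theorem commQ_G (hA : IsUnit A) (hQA : Q * A = A * Q) (hQC : Q * C = C * Q) (n : ℕ) :
    Commute Q (1 - C * Ring.inverse A * Q ^ n) :=
  (Commute.one_right Q).sub_right
    (((show Commute Q C from hQC).mul_right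
      (commute_inverse (show Commute Q A from hQA))).mul_right ((Commute.refl Q).pow_right n))

theorem Wlem (hQ : IsUnit Q) (hA : IsUnit A) (hQA : Q * A = A * Q) (hQC : Q * C = C * Q)
    (n k : ℕ) (hCk : IsUnit (1 - C * Q ^ k)) :
    (1 - C * Ring.inverse A * Q ^ n) * (A * Pf A C Q k) =
      Ring.inverse Q ^ k * Pf A C Q k - Ring.inverse Q ^ k * Pf A C Q (k + 1)
        + C * Pf A C Q (k + 1) - C * (Q ^ n * Pf A C Q k) := by
  have hcomm : Commute (Ring.inverse A) (Q ^ n) :=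
    ((commute_inverse (show Commute Q A from hQA)).pow_left n).symm
  have hiA : Ring.inverse A * Q ^ n * A = Q ^ n := by
    rw [hcomm.eq, mul_assoc, Ring.inverse_mul_cancel _ hA, mul_one]
  have hQiC : Ring.inverse Q ^ k * C = C * Ring.inverse Q ^ k :=
    (((commute_inverse (show Commute C Q from hQC.symm)).symm).pow_left k).eq
  have h2 : Ring.inverse Q ^ k * Q ^ k = 1 := by
    rw [Ring.inverse_pow, Ring.inverse_mul_cancel _ (hQ.pow k)]
  have hAP := APf hQ hQA k hCk
  calc (1 - C * Ring.inverse A * Q ^ n) * (A * Pf A C Q k)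
      = A * Pf A C Q k - C * ((Ring.inverse A * Q ^ n * A) * Pf A C Q k) := by noncomm_ring
    _ = A * Pf A C Q k - C * (Q ^ n * Pf A C Q k) := by rw [hiA]
    _ = Ring.inverse Q ^ k * Pf A C Q k - Ring.inverse Q ^ k * Pf A C Q (k + 1)
          + (Ring.inverse Q ^ k * C) * (Q ^ k * Pf A C Q (k + 1))
          - C * (Q ^ n * Pf A C Q k) := by rw [hAP]; noncomm_ring
    _ = Ring.inverse Q ^ k * Pf A C Q k - Ring.inverse Q ^ k * Pf A C Q (k + 1)
          + C * ((Ring.inverse Q ^ k * Q ^ k) * Pf A C Q (k + 1))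
          - C * (Q ^ n * Pf A C Q k) := by rw [hQiC]; noncomm_ring
    _ = _ := by rw [h2, one_mul]

theorem telescope (N : ℕ) (P a b e : ℕ → R)
    (h0 : a 0 = b 0) (hs : ∀ k, k < N + 1 → a (k + 1) = b (k + 1) - e k)
    (hN : b (N + 1) = 0) :
    ∑ k ∈ Finset.range (N + 2), a k * P k =
      ∑ k ∈ Finset.range (N + 1), b k * P k -
        ∑ k ∈ Finset.range (N + 1), e k * P (k + 1) := by
  rw [Finset.sum_range_succ' (fun k => a k * P k) (N + 1)]
  have h1 : ∑ k ∈ Finset.range (N + 1), a (k + 1) * P (k + 1)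
      = ∑ k ∈ Finset.range (N + 1), (b (k + 1) * P (k + 1) - e k * P (k + 1)) := by
    refine Finset.sum_congr rfl fun k hk => ?_
    rw [hs k (Finset.mem_range.mp hk), sub_mul]
  rw [h1, Finset.sum_sub_distrib, h0]
  have h2 : ∑ k ∈ Finset.range (N + 2), b k * P k
      = ∑ k ∈ Finset.range (N + 1), b (k + 1) * P (k + 1) + b 0 * P 0 :=
    Finset.sum_range_succ' _ _
  have h3 : ∑ k ∈ Finset.range (N + 2), b k * P k
      = ∑ k ∈ Finset.range (N + 1), b k * P k := by
    rw [Finset.sum_range_succ, hN, zero_mul, add_zero]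
  have h4 : ∑ k ∈ Finset.range (N + 1), b (k + 1) * P (k + 1) + b 0 * P 0
      = ∑ k ∈ Finset.range (N + 1), b k * P k := by rw [← h2, h3]
  rw [← h4]
  abel


theorem stepk (hQ : IsUnit Q) (hA : IsUnit A) (hQA : Q * A = A * Q) (hQC : Q * C = C * Q)
    (n k : ℕ) (hCn : IsUnit (1 - C * Q ^ n)) (hCk : IsUnit (1 - C * Q ^ k)) :
    (1 - C * Q ^ n) * (Ring.inverse (1 - C * Q ^ n) * (1 - C * Ring.inverse A * Q ^ n) * A *
        (((cT Q n k : Tc Q) : R) * Pf A C Q k)) =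
      (((invT (qT Q) ^ k * cT Q n k : Tc Q) : R) * Pf A C Q k
        - ((invT (qT Q) ^ k * cT Q n k : Tc Q) : R) * Pf A C Q (k + 1))
      + (C * (((cT Q n k : Tc Q) : R) * Pf A C Q (k + 1))
        - C * (Q ^ n * (((cT Q n k : Tc Q) : R) * Pf A C Q k))) := by
  set c : R := ((cT Q n k : Tc Q) : R) with hc
  have hc1 : Commute c A := Tc_comm (cT Q n k).2 (show Commute Q A from hQA)
  have hc2 : Commute c (1 - C * Ring.inverse A * Q ^ n) :=
    Tc_comm (cT Q n k).2 (commQ_G hA hQA hQC n)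
  have hc3 : Commute c C := Tc_comm (cT Q n k).2 (show Commute Q C from hQC)
  have hc4 : Commute c (Q ^ n) := Tc_comm (cT Q n k).2 ((Commute.refl Q).pow_right n)
  have hco : ((invT (qT Q) ^ k * cT Q n k : Tc Q) : R) = c * Ring.inverse Q ^ k := by
    rw [mul_comm (invT (qT Q) ^ k) (cT Q n k)]
    push_cast
    rfl
  rw [hco]
  calc (1 - C * Q ^ n) * (Ring.inverse (1 - C * Q ^ n) * (1 - C * Ring.inverse A * Q ^ n) * A *
        (c * Pf A C Q k))
      = ((1 - C * Q ^ n) * Ring.inverse (1 - C * Q ^ n)) *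
          ((1 - C * Ring.inverse A * Q ^ n) * (A * (c * Pf A C Q k))) := by noncomm_ring
    _ = (1 - C * Ring.inverse A * Q ^ n) * (A * (c * Pf A C Q k)) := by
        rw [Ring.mul_inverse_cancel _ hCn, one_mul]
    _ = (1 - C * Ring.inverse A * Q ^ n) * (c * (A * Pf A C Q k)) := by
        rw [show A * (c * Pf A C Q k) = c * (A * Pf A C Q k) from by
          rw [← mul_assoc, ← hc1.eq, mul_assoc]]
    _ = c * ((1 - C * Ring.inverse A * Q ^ n) * (A * Pf A C Q k)) := by
        rw [← mul_assoc, ← hc2.eq, mul_assoc]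
    _ = c * (Ring.inverse Q ^ k * Pf A C Q k - Ring.inverse Q ^ k * Pf A C Q (k + 1)
          + C * Pf A C Q (k + 1) - C * (Q ^ n * Pf A C Q k)) := by
        rw [Wlem hQ hA hQA hQC n k hCk]
    _ = (c * Ring.inverse Q ^ k) * Pf A C Q k - (c * Ring.inverse Q ^ k) * Pf A C Q (k + 1)
          + (c * C) * Pf A C Q (k + 1) - (((c * C) * Q ^ n) * Pf A C Q k) := by noncomm_ring
    _ = (c * Ring.inverse Q ^ k) * Pf A C Q k - (c * Ring.inverse Q ^ k) * Pf A C Q (k + 1)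
          + (C * c) * Pf A C Q (k + 1) - ((C * (Q ^ n * c)) * Pf A C Q k) := by
        rw [hc3.eq, mul_assoc C c (Q ^ n), hc4.eq]
    _ = _ := by noncomm_ring

theorem key (hQ : IsUnit Q) (hA : IsUnit A) (hQA : Q * A = A * Q) (hQC : Q * C = C * Q) :
    ∀ n : ℕ, (∀ m < n, IsUnit (1 - C * Q ^ m)) → (∀ m < n, IsUnit (1 - Q ^ (m + 1))) →
      ∑ k ∈ Finset.range (n + 1), (((cT Q n k : Tc Q) : R) * Pf A C Q k) = Ff A C Q n := by
  intro n
  induction n with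
  | zero =>
      intro _ _
      rw [Finset.sum_range_one]
      show ((1 : Tc Q) : R) * Pf A C Q 0 = Ff A C Q 0
      rw [Pf_zero]
      simp [Ff, opr_zero]
  | succ n ih =>
      intro hC hq
      have hCn : IsUnit (1 - C * Q ^ n) := hC n (Nat.lt_succ_self n)
      have hE : ∀ m, m ≤ n → (1 - qT Q * qT Q ^ m) * invT (1 - qT Q * qT Q ^ m) = 1 := by
        intro m hm
        have h := hq m (Nat.lt_succ_of_le hm)
        rw [pow_succ'] at h
        exact Subtype.ext (by push_cast; exact Ring.mul_inverse_cancel _ h)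
      have hu : qT Q ^ n * invT (qT Q ^ n) = 1 :=
        Subtype.ext (by push_cast; exact Ring.mul_inverse_cancel _ (hQ.pow n))
      have hv : qT Q ^ (n + 1) * invT (qT Q ^ (n + 1)) = 1 :=
        Subtype.ext (by push_cast; exact Ring.mul_inverse_cancel _ (hQ.pow (n + 1)))
      have hqi : qT Q * invT (qT Q) = 1 :=
        Subtype.ext (by push_cast; exact Ring.mul_inverse_cancel _ hQ)
      have hFn := ih (fun m hm => hC m (hm.trans (Nat.lt_succ_self n)))
        (fun m hm => hq m (hm.trans (Nat.lt_succ_self n)))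
      rw [Ff_succ, ← hFn, Finset.mul_sum]
      refine hCn.mul_left_cancel ?_
      conv_rhs => rw [Finset.mul_sum]
      rw [Finset.sum_congr rfl (fun k hk =>
        stepk hQ hA hQA hQC n k hCn (hC k (Finset.mem_range.mp hk)))]
      rw [Finset.sum_add_distrib, Finset.sum_sub_distrib, Finset.sum_sub_distrib]
      -- abbreviations
      set S := ∑ k ∈ Finset.range (n + 1 + 1), (((cT Q (n + 1) k : Tc Q) : R) * Pf A C Q k) with hS
      -- telescope I
      have hT1 : (∑ k ∈ Finset.range (n + 1), ((invT (qT Q) ^ k * cT Q n k : Tc Q) : R) * Pf A C Q k)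
          - ∑ k ∈ Finset.range (n + 1), ((invT (qT Q) ^ k * cT Q n k : Tc Q) : R) * Pf A C Q (k + 1)
          = S := by
        refine (telescope n (Pf A C Q) _ _ _ ?_ ?_ ?_).symm
        · show ((cT Q (n + 1) 0 : Tc Q) : R) = _
          norm_num [cT]
        · intro k hk
          have h1 := one' Q n hqi hu k (fun m hm => hE m (by omega)) hv
          show ((cT Q (n + 1) (k + 1) : Tc Q) : R) = _
          rw [h1]
          push_cast
          ring
        · show ((invT (qT Q) ^ (n + 1) * cT Q n (n + 1) : Tc Q) : R) = 0
          rw [czero Q n hu, mul_zero]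
          rfl
      -- telescope II
      have hT2 : ∑ k ∈ Finset.range (n + 1 + 1), ((qT Q ^ n * cT Q (n + 1) k : Tc Q) : R) * Pf A C Q k
          = (∑ k ∈ Finset.range (n + 1), ((qT Q ^ n * cT Q n k : Tc Q) : R) * Pf A C Q k)
            - ∑ k ∈ Finset.range (n + 1), ((cT Q n k : Tc Q) : R) * Pf A C Q (k + 1) := by
        refine telescope n (Pf A C Q) _ _ _ ?_ ?_ ?_
        · norm_num [cT]
        · intro k hk
          have h2 := two Q n hu hv k (fun m hm => hE m (by omega))
          show ((qT Q ^ n * cT Q (n + 1) (k + 1) : Tc Q) : R) = _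
          rw [h2]
          push_cast
          ring
        · show ((qT Q ^ n * cT Q n (n + 1) : Tc Q) : R) = 0
          rw [czero Q n hu, mul_zero]
          rfl
      have hQnS : Q ^ n * S =
          ∑ k ∈ Finset.range (n + 1 + 1), ((qT Q ^ n * cT Q (n + 1) k : Tc Q) : R) * Pf A C Q k := by
        rw [hS, Finset.mul_sum]
        refine Finset.sum_congr rfl fun k _ => ?_
        push_cast
        rw [coe_qT, mul_assoc]
      have hQnS2 : Q ^ n * (∑ k ∈ Finset.range (n + 1), (((cT Q n k : Tc Q) : R) * Pf A C Q k))
          = ∑ k ∈ Finset.range (n + 1), ((qT Q ^ n * cT Q n k : Tc Q) : R) * Pf A C Q k := by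
        rw [Finset.mul_sum]
        refine Finset.sum_congr rfl fun k _ => ?_
        push_cast
        rw [coe_qT, mul_assoc]
      have e5 : ∑ k ∈ Finset.range (n + 1), ((cT Q n k : Tc Q) : R) * Pf A C Q (k + 1)
          = (∑ k ∈ Finset.range (n + 1), ((qT Q ^ n * cT Q n k : Tc Q) : R) * Pf A C Q k)
            - Q ^ n * S := by
        rw [hQnS, hT2]
        abel
      have hCsum1 : ∑ k ∈ Finset.range (n + 1), C * (((cT Q n k : Tc Q) : R) * Pf A C Q (k + 1))
          = C * ∑ k ∈ Finset.range (n + 1), ((cT Q n k : Tc Q) : R) * Pf A C Q (k + 1) :=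
        (Finset.mul_sum _ _ _).symm
      have hCsum2 : ∑ k ∈ Finset.range (n + 1),
            C * (Q ^ n * (((cT Q n k : Tc Q) : R) * Pf A C Q k))
          = C * (Q ^ n * ∑ k ∈ Finset.range (n + 1), ((cT Q n k : Tc Q) : R) * Pf A C Q k) := by
        rw [Finset.mul_sum, Finset.mul_sum]
      rw [hT1, hCsum1, hCsum2, e5, hQnS2]
      noncomm_ring

end Main

end NCQCV

/-- Noncommutative q-Chu–Vandermonde summation of type I:
`₂φ₁⌈A, Q⁻ⁿ; C; Q, Q⌋ = ⌈CA⁻¹; C; Q, A⌋_n`. -/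
theorem ncQChuVandermondeI {R : Type*} [Ring R] (A C Q : R) (n : ℕ)
    (hQ : IsUnit Q) (hA : IsUnit A)
    (hQA : Q * A = A * Q) (hQC : Q * C = C * Q)
    (hC : ∀ m : ℕ, m < n → IsUnit (1 - C * Q ^ m))
    (hq : ∀ m : ℕ, m < n → IsUnit (1 - Q ^ (m + 1))) :
    (∑ k ∈ Finset.range (n + 1),
      opr k (fun j =>
        Ring.inverse (1 - C * Q ^ (k - 1 - j)) * (1 - A * Q ^ (k - 1 - j)) *
        (Ring.inverse (1 - Q * Q ^ (k - 1 - j)) *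
          (1 - Ring.inverse (Q ^ n) * Q ^ (k - 1 - j)) * Q))) =
    opr n (fun j =>
      Ring.inverse (1 - C * Q ^ (n - 1 - j)) *
        (1 - C * Ring.inverse A * Q ^ (n - 1 - j)) * A) := by
  rw [Finset.sum_congr rfl (fun k _ => NCQCV.term_eq hQA hQC n k)]
  exact NCQCV.key hQ hA hQA hQC n hC hq
end

section
/- Noncommutative Pfaff–Saalschütz summation of type I: Let A, B, C be elements of a unit ring R such that the element A+B−C commutes with each of A, B and C, and let n be a nonnegative integer. Then Σ_{k=0}^{n} ⌈A, B, −nI; C, A+B−C+(1−n)I, I; I⌋_k = ⌈C−B, C−A; C, C−A−B⌋_n, i.e. the terminating noncommutative hypergeometric series ₃F₂⌈A, B, −nI; C, A+B−C+(1−n)I; I⌋ of type I equals the type I noncommutative shifted factorial with upper parameters C−B, C−A and lower parameters C, C−A−B of length n. -/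
section

variable {R : Type*} [Ring R]

theorem Commute.ringInverse_left {a b : R} (h : Commute a b) : Commute (Ring.inverse a) b := by
  by_cases ha : IsUnit a
  · obtain ⟨u, rfl⟩ := ha
    rw [Ring.inverse_unit]
    exact h.units_inv_left
  · rw [Ring.inverse_non_unit a ha]
    exact Commute.zero_left b

theorem Commute.ringInverse_right {a b : R} (h : Commute a b) : Commute a (Ring.inverse b) :=
  h.symm.ringInverse_left.symm

theorem Commute.add_natCast_left {a b : R} (h : Commute a b) (i : ℕ) : Commute (a + i) b :=
  h.add_left (Nat.cast_commute i b)

theorem Commute.add_natCast_right {a b : R} (h : Commute a b) (i : ℕ) : Commute a (b + i) :=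
  h.add_right (Nat.cast_commute i a).symm

theorem Ring.inverse_neg (a : R) : Ring.inverse (-a) = -Ring.inverse a := by
  by_cases ha : IsUnit a
  · obtain ⟨u, rfl⟩ := ha
    rw [← Units.val_neg, Ring.inverse_unit, Ring.inverse_unit, inv_neg, Units.val_neg]
  · rw [Ring.inverse_non_unit a ha, Ring.inverse_non_unit _ (mt (IsUnit.neg_iff a).mp ha),
      neg_zero]

def oprRev (F : ℕ → R) (k : ℕ) : R :=
  opr k fun j => F (k - 1 - j)

theorem oprRev_succ (F : ℕ → R) (k : ℕ) : oprRev F (k + 1) = F k * oprRev F k := by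
  simp only [oprRev, opr, List.range_succ_eq_map, List.map_cons, List.prod_cons, List.map_map,
    Nat.add_sub_cancel, Nat.sub_zero]
  congr 3
  ext j
  simp only [Function.comp_apply, Nat.sub_sub, Nat.add_comm 1 j]

theorem Commute.ascPochhammer_eval_left {E x : R} (h : Commute E x) (m : ℕ) :
    Commute ((ascPochhammer R m).eval E) x := by
  induction m with
  | zero => simp
  | succ m ih =>
    rw [ascPochhammer_succ_eval]
    exact ih.mul_left (h.add_natCast_left m)

theorem isUnit_ascPochhammer_eval {E : R} {m : ℕ} (h : ∀ i < m, IsUnit (E + i)) :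
    IsUnit ((ascPochhammer R m).eval E) := by
  induction m with
  | zero => simp
  | succ m ih =>
    rw [ascPochhammer_succ_eval]
    exact (ih fun i hi => h i (hi.trans m.lt_succ_self)).mul (h m m.lt_succ_self)

/-- `(C)ₖ⁻¹ (A)ₖ (B)ₖ`, its factors interleaved in the order of a type I shifted factorial. -/
noncomputable def ncPochRatio (A B C : R) : ℕ → R :=
  oprRev fun i => Ring.inverse (C + i) * (A + i) * (B + i)

theorem ncPochRatio_succ (A B C : R) (k : ℕ) :
    ncPochRatio A B C (k + 1) = Ring.inverse (C + k) * (A + k) * (B + k) * ncPochRatio A B C k :=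
  oprRev_succ _ k

noncomputable def saalschuetzFactor (A B C : R) (n i : ℕ) : R :=
  Ring.inverse (C + i) * (A + i) * (Ring.inverse (A + B - C + 1 - n + i) * (B + i)) *
    (Ring.inverse ((1 : R) + i) * (-(n : R) + i))

theorem Commute.inverse_add_natCast_mul_mul {x A B C : R} (hA : Commute x A) (hB : Commute x B)
    (hC : Commute x C) (i : ℕ) : Commute x (Ring.inverse (C + i) * (A + i) * (B + i)) :=
  ((hC.add_natCast_right i).ringInverse_right.mul_right (hA.add_natCast_right i)).mul_right
    (hB.add_natCast_right i)

theorem add_natCast_mul_ncPochRatio_succ (A B : R) {C : R} {k n : ℕ} (hkn : k ≤ n)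
    (hC : IsUnit (C + k)) :
    (C + n) * ncPochRatio A B C (k + 1) =
      (A + k) * ((B + k) * ncPochRatio A B C k) +
        ((n - k : ℕ) : R) * ncPochRatio A B C (k + 1) := by
  obtain ⟨m, rfl⟩ := Nat.exists_eq_add_of_le hkn
  rw [Nat.add_sub_cancel_left, Nat.cast_add, ← add_assoc, add_mul, ncPochRatio_succ]
  simp only [mul_assoc, Ring.mul_inverse_cancel_left _ _ hC]

theorem sum_range_choose_mul_sub_mul {S : Type*} [Semiring S] (f : ℕ → ℕ → S) (n : ℕ) :
    ∑ i ∈ Finset.range (n + 1), (n.choose i : S) * (((n - i : ℕ) : S) * f (i + 1) (n - i)) =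
      ∑ i ∈ Finset.range (n + 1), (n.choose i : S) * ((i : S) * f i (n + 1 - i)) := by
  rw [Finset.sum_range_succ, Finset.sum_range_succ']
  simp only [Nat.sub_self, Nat.cast_zero, zero_mul, mul_zero, add_zero]
  refine Finset.sum_congr rfl fun i _ => ?_
  rw [Nat.add_sub_add_right, ← mul_assoc, ← mul_assoc, ← Nat.cast_mul, ← Nat.cast_mul,
    Nat.choose_succ_right_eq]

variable {A B C E : R}

theorem Commute.of_eq_add_add (hEA : Commute E A) (hEB : Commute E B) (hC : C = A + B + E) :
    Commute E C :=
  hC ▸ (hEA.add_right hEB).add_right (Commute.refl E)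

theorem ncChuVandermonde_contiguous (hEA : Commute E A) (hEB : Commute E B)
    (hC : C = A + B + E) {k n : ℕ} (hkn : k ≤ n) (hCk : IsUnit (C + k)) :
    (C + n) * ((ascPochhammer R (n + 1 - k)).eval E * ncPochRatio A B C k +
        (ascPochhammer R (n - k)).eval E * ncPochRatio A B C (k + 1)) +
      (k : R) * ((ascPochhammer R (n + 1 - k)).eval E * ncPochRatio A B C k) =
    (A + E + n) * ((B + E + n) * ((ascPochhammer R (n - k)).eval E * ncPochRatio A B C k)) +
      ((n - k : ℕ) : R) * ((ascPochhammer R (n - k)).eval E * ncPochRatio A B C (k + 1)) := by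
  obtain ⟨m, rfl⟩ := Nat.exists_eq_add_of_le hkn
  have hquad : (A + E + ↑(k + m)) * ((B + E + ↑(k + m)) * ncPochRatio A B C k) =
      (C + ↑(k + m)) * ((E + m) * ncPochRatio A B C k) + k * ((E + m) * ncPochRatio A B C k) +
        (A + k) * ((B + k) * ncPochRatio A B C k) := by
    simp only [← mul_assoc, ← add_mul]
    congr 1
    subst hC
    push_cast
    simp only [mul_add, add_mul, ← hEB.eq, (Nat.cast_commute k B).eq, (Nat.cast_commute k E).eq,
      (Nat.cast_commute m B).eq, (Nat.cast_commute m E).eq, (Nat.cast_commute m (k : R)).eq]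
    abel
  have hshift := add_natCast_mul_ncPochRatio_succ A B (n := k + m) le_self_add hCk
  have hEC := hEA.of_eq_add_add hEB hC
  have hcomm : ∀ x, Commute E x → Commute ((ascPochhammer R m).eval E) x :=
    fun x hx => hx.ascPochhammer_eval_left m
  rw [Nat.add_sub_cancel_left] at hshift ⊢
  rw [show k + m + 1 - k = m + 1 by omega, ascPochhammer_succ_eval]
  simp only [mul_assoc]
  rw [mul_add (C + _)]
  simp only [(hcomm _ (hEC.add_natCast_right (k + m))).symm.left_comm,
    (hcomm _ (Nat.cast_commute k E).symm).symm.left_comm,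
    (hcomm _ (Nat.cast_commute m E).symm).symm.left_comm,
    (hcomm _ ((hEA.add_right (Commute.refl E)).add_natCast_right (k + m))).symm.left_comm,
    (hcomm _ ((hEB.add_right (Commute.refl E)).add_natCast_right (k + m))).symm.left_comm]
  rw [hshift, hquad]
  simp only [mul_add]
  abel

theorem ncChuVandermonde (hEA : Commute E A) (hEB : Commute E B) (hC : C = A + B + E) {n : ℕ}
    (hCu : ∀ m < n, IsUnit (C + m)) :
    ∑ k ∈ Finset.range (n + 1),
        (n.choose k : R) * ((ascPochhammer R (n - k)).eval E * ncPochRatio A B C k) =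
      ncPochRatio (A + E) (B + E) C n := by
  induction n with
  | zero => simp [ncPochRatio, oprRev, opr]
  | succ n ih =>
    set S : ℕ → R := fun n => ∑ k ∈ Finset.range (n + 1),
        (n.choose k : R) * ((ascPochhammer R (n - k)).eval E * ncPochRatio A B C k) with hS
    have hpascal : S (n + 1) = ∑ k ∈ Finset.range (n + 1), (n.choose k : R) *
        ((ascPochhammer R (n + 1 - k)).eval E * ncPochRatio A B C k +
          (ascPochhammer R (n - k)).eval E * ncPochRatio A B C (k + 1)) := by
      simp only [hS, mul_add, Finset.sum_add_distrib,
        Finset.sum_choose_succ_mul (fun k m => (ascPochhammer R m).eval E * ncPochRatio A B C k)]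
    have habsorb := sum_range_choose_mul_sub_mul
      (fun k m => (ascPochhammer R m).eval E * ncPochRatio A B C k) n
    have hterm : ∀ k ∈ Finset.range (n + 1),
        (C + n) * ((n.choose k : R) * ((ascPochhammer R (n + 1 - k)).eval E * ncPochRatio A B C k +
            (ascPochhammer R (n - k)).eval E * ncPochRatio A B C (k + 1))) +
          (n.choose k : R) *
            ((k : R) * ((ascPochhammer R (n + 1 - k)).eval E * ncPochRatio A B C k)) =
        (A + E + n) * ((B + E + n) *
            ((n.choose k : R) * ((ascPochhammer R (n - k)).eval E * ncPochRatio A B C k))) +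
          (n.choose k : R) *
            (((n - k : ℕ) : R) *
              ((ascPochhammer R (n - k)).eval E * ncPochRatio A B C (k + 1))) := by
      intro k hk
      have hkn := Nat.lt_succ_iff.mp (Finset.mem_range.mp hk)
      rw [(Nat.cast_commute (n.choose k) (C + n)).symm.left_comm,
        (Nat.cast_commute (n.choose k) (B + E + n)).symm.left_comm,
        (Nat.cast_commute (n.choose k) (A + E + n)).symm.left_comm, ← mul_add, ← mul_add,
        ncChuVandermonde_contiguous hEA hEB hC hkn (hCu k (Nat.lt_succ_of_le hkn))]
    have hrec : (C + n) * S (n + 1) = (A + E + n) * ((B + E + n) * S n) := by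
      have h := Finset.sum_congr rfl hterm
      simp only [Finset.sum_add_distrib, ← Finset.mul_sum] at h
      rw [hpascal]
      exact add_right_cancel (h.trans (congrArg _ habsorb))
    change S (n + 1) = _
    rw [ncPochRatio_succ, ← ih fun m hm => hCu m (hm.trans n.lt_succ_self), mul_assoc, mul_assoc,
      ← hrec, Ring.inverse_mul_cancel_left _ _ (hCu n n.lt_succ_self)]

theorem saalschuetzFactor_eq (hEB : Commute E B) (hC : C = A + B + E) {n i : ℕ} (hi : i < n) :
    saalschuetzFactor A B C n i = Ring.inverse (C + i) * (A + i) * (B + i) *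
      (Ring.inverse (E + (n - 1 - i : ℕ)) * (Ring.inverse ((1 : R) + i) * (n - i : ℕ))) := by
  obtain ⟨m, rfl⟩ := Nat.exists_eq_add_of_lt hi
  rw [show i + m + 1 - 1 - i = m by omega, show i + m + 1 - i = m + 1 by omega]
  have hD : A + B - C + 1 - ((i + m + 1 : ℕ) : R) + i = -(E + m) := by
    subst hC
    push_cast
    abel
  have hn : -((i + m + 1 : ℕ) : R) + i = -((m + 1 : ℕ) : R) := by
    push_cast
    abel
  rw [saalschuetzFactor, hD, hn, Ring.inverse_neg]
  simp only [neg_mul, mul_neg, neg_neg]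
  rw [((hEB.add_natCast_left m).add_natCast_right i).ringInverse_left.eq]
  simp only [mul_assoc]

theorem inverse_mul_choose_mul_ascPochhammer_eval {k n : ℕ} (hk : k < n)
    (hE : IsUnit (E + (n - 1 - k : ℕ))) (hI : IsUnit ((1 : R) + k)) :
    Ring.inverse (E + (n - 1 - k : ℕ)) * (Ring.inverse ((1 : R) + k) * (n - k : ℕ)) *
        ((n.choose k : R) * (ascPochhammer R (n - k)).eval E) =
      (n.choose (k + 1) : R) * (ascPochhammer R (n - (k + 1))).eval E := by
  obtain ⟨m, rfl⟩ := Nat.exists_eq_add_of_lt hk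
  have hchoose : (m + 1) * (k + m + 1).choose k = (k + 1) * (k + m + 1).choose (k + 1) := by
    have := Nat.choose_succ_right_eq (k + m + 1) k
    rw [show k + m + 1 - k = m + 1 by omega] at this
    linarith
  rw [show k + m + 1 - 1 - k = m by omega, show k + m + 1 - k = m + 1 by omega,
    show k + m + 1 - (k + 1) = m by omega] at *
  rw [mul_assoc, Ring.inverse_mul_eq_iff_eq_mul _ _ _ hE, mul_assoc,
    Ring.inverse_mul_eq_iff_eq_mul _ _ _ hI, ← mul_assoc ((m + 1 : ℕ) : R), ← Nat.cast_mul,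
    hchoose, ascPochhammer_succ_eval,
    ((Commute.refl E).add_natCast_right m).ascPochhammer_eval_left m |>.eq,
    (Nat.cast_commute _ (E + m)).left_comm, Nat.cast_mul, mul_assoc]
  push_cast
  rw [add_comm (k : R), (((Commute.one_right E).add_natCast_right k).add_natCast_left m).left_comm]

theorem ascPochhammer_eval_mul_oprRev_saalschuetzFactor (hEA : Commute E A) (hEB : Commute E B)
    (hC : C = A + B + E) {n k : ℕ} (hk : k ≤ n) (hEu : ∀ m < n, IsUnit (E + m))
    (hI : ∀ m < n, IsUnit ((1 : R) + m)) :
    (ascPochhammer R n).eval E * oprRev (saalschuetzFactor A B C n) k =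
      (n.choose k : R) * ((ascPochhammer R (n - k)).eval E * ncPochRatio A B C k) := by
  induction k with
  | zero => simp [oprRev, opr, ncPochRatio]
  | succ k ih =>
    have hkn : k < n := hk
    have hEC := hEA.of_eq_add_add hEB hC
    have hX := hEA.inverse_add_natCast_mul_mul hEB hEC k
    have hs : Commute E
        (Ring.inverse (E + (n - 1 - k : ℕ)) * (Ring.inverse ((1 : R) + k) * (n - k : ℕ))) :=
      ((Commute.refl E).add_natCast_right _).ringInverse_right.mul_right
        (((Commute.one_right E).add_natCast_right k).ringInverse_right.mul_right
          (Nat.cast_commute _ E).symm)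
    have hstep := inverse_mul_choose_mul_ascPochhammer_eval hkn (hEu _ (by omega)) (hI k hkn)
    rw [oprRev_succ, saalschuetzFactor_eq hEB hC hkn, ncPochRatio_succ, mul_assoc,
      (hX.ascPochhammer_eval_left n).left_comm, (hs.ascPochhammer_eval_left n).left_comm,
      ih hkn.le, ← mul_assoc _ _ (ncPochRatio A B C k), ← mul_assoc _ ((n.choose k : R) * _),
      hstep, ← mul_assoc, ← ((Nat.cast_commute _ _).mul_left (hX.ascPochhammer_eval_left _)).eq]
    simp only [mul_assoc]

theorem ascPochhammer_eval_mul_oprRev (hA : Commute E A) (hB : Commute E B) (hC : Commute E C)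
    {k : ℕ} (hEu : ∀ m < k, IsUnit (E + m)) :
    (ascPochhammer R k).eval E *
        oprRev (fun i => Ring.inverse (C + i) * (A + i) * (Ring.inverse (E + i) * (B + i))) k =
      ncPochRatio A B C k := by
  induction k with
  | zero => simp [oprRev, opr, ncPochRatio]
  | succ k ih =>
    rw [oprRev_succ, ascPochhammer_succ_eval, ncPochRatio_succ,
      ← ih fun m hm => hEu m (hm.trans k.lt_succ_self)]
    have hCk := (hC.add_natCast_right k).ringInverse_right
    have hAk := hA.add_natCast_right k
    have hBk := hB.add_natCast_right k
    simp only [mul_assoc]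
    rw [(hCk.add_natCast_left k).left_comm, (hAk.add_natCast_left k).left_comm,
      Ring.mul_inverse_cancel_left _ _ (hEu k k.lt_succ_self),
      (hCk.ascPochhammer_eval_left k).left_comm, (hAk.ascPochhammer_eval_left k).left_comm,
      (hBk.ascPochhammer_eval_left k).left_comm]

end

theorem ncPfaffSaalschuetzI_general {R : Type*} [Ring R] (A B C : R) (n : ℕ)
    (hDA : (A + B - C) * A = A * (A + B - C))
    (hDB : (A + B - C) * B = B * (A + B - C))
    (hC : ∀ m : ℕ, m < n → IsUnit (C + (m : R)))
    (hI : ∀ m : ℕ, m < n → IsUnit ((1 : R) + (m : R)))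
    (hCAB : ∀ m : ℕ, m < n → IsUnit (C - A - B + (m : R))) :
    (∑ k ∈ Finset.range (n + 1),
      opr k (fun j =>
        Ring.inverse (C + ((k - 1 - j : ℕ) : R)) * (A + ((k - 1 - j : ℕ) : R)) *
        (Ring.inverse (A + B - C + 1 - (n : R) + ((k - 1 - j : ℕ) : R)) *
          (B + ((k - 1 - j : ℕ) : R))) *
        (Ring.inverse ((1 : R) + ((k - 1 - j : ℕ) : R)) *
          (-(n : R) + ((k - 1 - j : ℕ) : R))))) =
    opr n (fun j =>
      Ring.inverse (C + ((n - 1 - j : ℕ) : R)) * (C - B + ((n - 1 - j : ℕ) : R)) *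
      (Ring.inverse (C - A - B + ((n - 1 - j : ℕ) : R)) *
        (C - A + ((n - 1 - j : ℕ) : R)))) := by
  have hneg : ∀ x, Commute (A + B - C) x → Commute (C - A - B) x := fun x h => by
    rw [show C - A - B = -(A + B - C) by abel]
    exact h.neg_left
  have hEA := hneg A hDA
  have hEB := hneg B hDB
  have hCE : C = A + B + (C - A - B) := by abel
  have hEC := hEA.of_eq_add_add hEB hCE
  apply (isUnit_ascPochhammer_eval hCAB).mul_left_cancel
  change _ * ∑ k ∈ Finset.range (n + 1), oprRev (saalschuetzFactor A B C n) k =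
    _ * oprRev (fun i => Ring.inverse (C + i) * (C - B + i) *
      (Ring.inverse (C - A - B + i) * (C - A + i))) n
  rw [Finset.mul_sum, Finset.sum_congr rfl fun k hk =>
      ascPochhammer_eval_mul_oprRev_saalschuetzFactor hEA hEB hCE
        (Nat.lt_succ_iff.mp (Finset.mem_range.mp hk)) hCAB hI,
    ncChuVandermonde hEA hEB hCE hC,
    ascPochhammer_eval_mul_oprRev (hEC.sub_right hEB) (hEC.sub_right hEA) hEC hCAB]
  congr 1 <;> abel

/-- Noncommutative Pfaff–Saalschütz summation of type I:
`₃F₂⌈A, B, −nI; C, A+B−C+(1−n)I; I⌋ = ⌈C−B, C−A; C, C−A−B⌋_n`. -/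
theorem ncPfaffSaalschuetzI {R : Type*} [Ring R] (A B C : R) (n : ℕ)
    (hDA : (A + B - C) * A = A * (A + B - C))
    (hDB : (A + B - C) * B = B * (A + B - C))
    (hDC : (A + B - C) * C = C * (A + B - C))
    (hC : ∀ m : ℕ, m < n → IsUnit (C + (m : R)))
    (hD : ∀ m : ℕ, m < n → IsUnit (A + B - C + 1 - (n : R) + (m : R)))
    (hI : ∀ m : ℕ, m < n → IsUnit ((1 : R) + (m : R)))
    (hCAB : ∀ m : ℕ, m < n → IsUnit (C - A - B + (m : R))) :
    (∑ k ∈ Finset.range (n + 1),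
      opr k (fun j =>
        Ring.inverse (C + ((k - 1 - j : ℕ) : R)) * (A + ((k - 1 - j : ℕ) : R)) *
        (Ring.inverse (A + B - C + 1 - (n : R) + ((k - 1 - j : ℕ) : R)) *
          (B + ((k - 1 - j : ℕ) : R))) *
        (Ring.inverse ((1 : R) + ((k - 1 - j : ℕ) : R)) *
          (-(n : R) + ((k - 1 - j : ℕ) : R))))) =
    opr n (fun j =>
      Ring.inverse (C + ((n - 1 - j : ℕ) : R)) * (C - B + ((n - 1 - j : ℕ) : R)) *
      (Ring.inverse (C - A - B + ((n - 1 - j : ℕ) : R)) *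
        (C - A + ((n - 1 - j : ℕ) : R)))) :=
  ncPfaffSaalschuetzI_general A B C n hDA hDB hC hI hCAB
end

section
/- Reversed noncommutative Chu–Vandermonde summation: Let A and C be elements of a unit ring R and let n be a nonnegative integer. Then Σ_{k=0}^{n} ~⌈A, −nI; C, I; I⌋_k = ~⌈C−A; C⌋_n, where ~⌈A, −nI; C, I; I⌋_k = ∏_{j=1}^{k} [(A+(j−1)I)(C+(j−1)I)^{−1}(−nI+(j−1)I)((j−1)I+I)^{−1}] and ~⌈C−A; C⌋_n = ∏_{j=1}^{n} (C−A+(j−1)I)(C+(j−1)I)^{−1}, all ordered products taken left to right in increasing j. -/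
namespace NCChuAux

variable {R : Type*} [Ring R]

lemma opr_zero (f : ℕ → R) : opr 0 f = 1 := rfl

lemma opr_succ (n : ℕ) (f : ℕ → R) : opr (n + 1) f = opr n f * f n := by
  simp [opr, List.range_succ]

lemma opr_succ' (n : ℕ) (f : ℕ → R) : opr (n + 1) f = f 0 * opr n (fun j => f (j + 1)) := by
  simp [opr, List.range_succ_eq_map, List.map_map, Function.comp_def]

lemma opr_congr {n : ℕ} {f g : ℕ → R} (h : ∀ j, j < n → f j = g j) : opr n f = opr n g := by
  induction n with
  | zero => rfl
  | succ n ih =>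
      rw [opr_succ, opr_succ, ih (fun j hj => h j (by omega)), h n (by omega)]

lemma commute_opr {n : ℕ} {f : ℕ → R} {x : R} (h : ∀ j, Commute x (f j)) :
    Commute x (opr n f) := by
  induction n with
  | zero => simp only [opr_zero]; exact Commute.one_right x
  | succ n ih => rw [opr_succ]; exact ih.mul_right (h n)

lemma opr_mul_split (q c : ℕ → R) (hc : ∀ j x, Commute x (c j)) (n : ℕ) :
    opr n (fun j => q j * c j) = opr n q * opr n c := by
  induction n with
  | zero => simp [opr_zero]
  | succ n ih =>
      rw [opr_succ, opr_succ, opr_succ, ih]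
      have h1 : q n * opr n c = opr n c * q n := (commute_opr (fun j => hc j (q n))).eq
      calc opr n q * opr n c * (q n * c n)
          = opr n q * (opr n c * q n) * c n := by noncomm_ring
        _ = opr n q * (q n * opr n c) * c n := by rw [← h1]
        _ = opr n q * q n * (opr n c * c n) := by noncomm_ring

lemma commute_ringInverse {a x : R} (h : Commute x a) : Commute x (Ring.inverse a) := by
  by_cases ha : IsUnit a
  · obtain ⟨u, rfl⟩ := ha
    rw [Ring.inverse_unit]
    exact h.units_inv_right
  · rw [Ring.inverse_non_unit _ ha]
    exact Commute.zero_right x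

lemma inverse_mul_of_units {a b : R} (ha : IsUnit a) (hb : IsUnit b) :
    Ring.inverse (a * b) = Ring.inverse b * Ring.inverse a := by
  obtain ⟨u, rfl⟩ := ha
  obtain ⟨w, rfl⟩ := hb
  rw [← Units.val_mul, Ring.inverse_unit, Ring.inverse_unit, Ring.inverse_unit, mul_inv_rev, Units.val_mul]

/-- `Qk A C k = ∏_{j<k} (A+j)(C+j)⁻¹`. -/
noncomputable def Qk (A C : R) (k : ℕ) : R := opr k (fun j => (A + (j : R)) * Ring.inverse (C + (j : R)))

/-- `Gg A C n = ∏_{j<n} (C-A+j)(C+j)⁻¹`. -/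
noncomputable def Gg (A C : R) (n : ℕ) : R := opr n (fun j => (C - A + (j : R)) * Ring.inverse (C + (j : R)))

lemma Qk_succ' (A C : R) (k : ℕ) :
    Qk A C (k + 1) = A * Ring.inverse C * Qk (A + 1) (C + 1) k := by
  rw [Qk, opr_succ']
  simp only [Nat.cast_zero, add_zero]
  rw [Qk]
  congr 1
  apply opr_congr
  intro j _
  push_cast
  rw [show A + ((j : R) + 1) = A + 1 + (j : R) by abel,
    show C + ((j : R) + 1) = C + 1 + (j : R) by abel]

lemma Gg_succ' (A C : R) (n : ℕ) :
    Gg A C (n + 1) = (C - A) * Ring.inverse C * Gg A (C + 1) n := by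
  rw [Gg, opr_succ']
  simp only [Nat.cast_zero, add_zero]
  rw [Gg]
  congr 1
  apply opr_congr
  intro j _
  push_cast
  rw [show C - A + ((j : R) + 1) = C + 1 - A + (j : R) by abel,
    show C + ((j : R) + 1) = C + 1 + (j : R) by abel]

/-- Contiguous relation (sub-lemma M). -/
lemma lemM : ∀ (n : ℕ) (A C : R), (∀ m : ℕ, m ≤ n → IsUnit (C + (m : R))) →
    Gg A (C + 1) n - Gg A C n
      = A * Ring.inverse C * (Gg A (C + 1) n - Gg (A + 1) (C + 1) n)
  | 0, A, C, _ => by simp [Gg, opr_zero]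
  | (n + 1), A, C, hC => by
    have hv : IsUnit C := by simpa using hC 0 (by omega)
    have hu : IsUnit (C + 1) := by simpa using hC 1 (by omega)
    have hIH := lemM n A (C + 1) (fun m hm => by
      have h := hC (m + 1) (by omega)
      push_cast at h
      rwa [show C + ((m : R) + 1) = C + 1 + (m : R) by abel] at h)
    rw [Gg_succ' A C n, Gg_succ' A (C + 1) n, Gg_succ' (A + 1) (C + 1) n]
    set u := Ring.inverse (C + 1) with hudef
    set v := Ring.inverse C with hvdef
    set X := Gg A (C + 1 + 1) n with hXdef
    set Y := Gg A (C + 1) n with hYdef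
    set Z := Gg (A + 1) (C + 1 + 1) n with hZdef
    have hCv : C * v = 1 := Ring.mul_inverse_cancel _ hv
    have hvC : v * C = 1 := Ring.inverse_mul_cancel _ hv
    have hC1u : (C + 1) * u = 1 := Ring.mul_inverse_cancel _ hu
    have hC1u' : C * u + u = 1 := by rw [← hC1u]; noncomm_ring
    have hv' : v = u + v * u := by
      calc v = v * 1 := (mul_one v).symm
        _ = v * (C * u + u) := by rw [hC1u']
        _ = (v * C) * u + v * u := by noncomm_ring
        _ = u + v * u := by rw [hvC, one_mul]
    have huv : v - u - v * u = 0 := by nth_rewrite 1 [hv']; abel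
    -- hIH : X - Y = A * u * (X - Z)
    have hY : Y = X - A * u * (X - Z) := by rw [← hIH]; abel
    rw [hY]
    have e1 : (C + 1 - A) * u = 1 - A * u := by rw [sub_mul, hC1u]
    have e2 : (C - A) * v = 1 - A * v := by rw [sub_mul, hCv]
    have e3 : (C + 1 - (A + 1)) * u = 1 - (A + 1) * u := by rw [sub_mul, hC1u]
    rw [e1, e2, e3]
    have h4 : A * (v - u - v * u) * Z = 0 := by rw [huv]; simp
    rw [← sub_eq_zero, ← h4]
    noncomm_ring

/-- commutation of the scalar `(-1)^k * (m : R)` with everything -/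
lemma scomm (k m : ℕ) (x : R) : Commute x ((-1 : R) ^ k * (m : R)) :=
  ((Commute.neg_one_right x).pow_right k).mul_right (Nat.cast_commute m x).symm

/-- Main lemma: `∑ (-1)^k C(n,k) Qk = Gg`. -/
lemma mainlem : ∀ (n : ℕ) (A C : R), (∀ m : ℕ, m < n → IsUnit (C + (m : R))) →
    (∑ k ∈ Finset.range (n + 1), (-1 : R) ^ k * (n.choose k : R) * Qk A C k) = Gg A C n
  | 0, A, C, _ => by simp [Qk, Gg, opr]
  | (n + 1), A, C, hC => by
    have hv : IsUnit C := by simpa using hC 0 (by omega)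
    have ih1 := mainlem n A C (fun m hm => hC m (by omega))
    have hshift : ∀ m : ℕ, m < n → IsUnit ((C + 1) + (m : R)) := fun m hm => by
      have h := hC (m + 1) (by omega)
      push_cast at h
      rwa [show C + ((m : R) + 1) = C + 1 + (m : R) by abel] at h
    have ih2 := mainlem n (A + 1) (C + 1) hshift
    have hpascal : ∀ k : ℕ,
        (-1 : R) ^ (k + 1) * (((n + 1).choose (k + 1) : ℕ) : R) * Qk A C (k + 1)
          = (-1 : R) ^ (k + 1) * ((n.choose (k + 1) : ℕ) : R) * Qk A C (k + 1)
            - A * Ring.inverse C *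
              ((-1 : R) ^ k * ((n.choose k : ℕ) : R) * Qk (A + 1) (C + 1) k) := by
      intro k
      rw [Nat.choose_succ_succ', Nat.cast_add, Qk_succ']
      set a := A * Ring.inverse C with ha
      set Q' := Qk (A + 1) (C + 1) k with hQ'
      have c1 : a * (-1 : R) ^ k = (-1 : R) ^ k * a := ((Commute.neg_one_right a).pow_right k).eq
      have c2 : a * ((n.choose k : ℕ) : R) = ((n.choose k : ℕ) : R) * a :=
        (Nat.cast_commute (n.choose k) a).eq.symm
      have h1 : a * ((-1 : R) ^ k * ((n.choose k : ℕ) : R) * Q')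
          = (-1 : R) ^ k * ((n.choose k : ℕ) : R) * (a * Q') := by
        calc a * ((-1 : R) ^ k * ((n.choose k : ℕ) : R) * Q')
            = (a * (-1 : R) ^ k) * ((n.choose k : ℕ) : R) * Q' := by noncomm_ring
          _ = ((-1 : R) ^ k * a) * ((n.choose k : ℕ) : R) * Q' := by rw [c1]
          _ = (-1 : R) ^ k * (a * ((n.choose k : ℕ) : R)) * Q' := by noncomm_ring
          _ = (-1 : R) ^ k * (((n.choose k : ℕ) : R) * a) * Q' := by rw [c2]
          _ = (-1 : R) ^ k * ((n.choose k : ℕ) : R) * (a * Q') := by noncomm_ring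
      rw [h1, pow_succ]
      noncomm_ring
    have hre : (∑ k ∈ Finset.range (n + 1 + 1),
          (-1 : R) ^ k * ((n.choose k : ℕ) : R) * Qk A C k)
        = (∑ k ∈ Finset.range (n + 1),
            (-1 : R) ^ (k + 1) * ((n.choose (k + 1) : ℕ) : R) * Qk A C (k + 1))
          + (-1 : R) ^ 0 * ((n.choose 0 : ℕ) : R) * Qk A C 0 :=
      Finset.sum_range_succ' _ (n + 1)
    calc (∑ k ∈ Finset.range (n + 1 + 1),
            (-1 : R) ^ k * (((n + 1).choose k : ℕ) : R) * Qk A C k)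
        = (∑ k ∈ Finset.range (n + 1),
            (-1 : R) ^ (k + 1) * (((n + 1).choose (k + 1) : ℕ) : R) * Qk A C (k + 1))
          + (-1 : R) ^ 0 * (((n + 1).choose 0 : ℕ) : R) * Qk A C 0 :=
        Finset.sum_range_succ' _ (n + 1)
      _ = (∑ k ∈ Finset.range (n + 1),
            ((-1 : R) ^ (k + 1) * ((n.choose (k + 1) : ℕ) : R) * Qk A C (k + 1)
              - A * Ring.inverse C *
                ((-1 : R) ^ k * ((n.choose k : ℕ) : R) * Qk (A + 1) (C + 1) k)))
          + (-1 : R) ^ 0 * ((n.choose 0 : ℕ) : R) * Qk A C 0 := by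
          exact congrArg₂ (· + ·) (Finset.sum_congr rfl (fun k _ => hpascal k)) (by norm_num)
      _ = ((∑ k ∈ Finset.range (n + 1),
            (-1 : R) ^ (k + 1) * ((n.choose (k + 1) : ℕ) : R) * Qk A C (k + 1))
          + (-1 : R) ^ 0 * ((n.choose 0 : ℕ) : R) * Qk A C 0)
          - ∑ k ∈ Finset.range (n + 1),
              A * Ring.inverse C *
                ((-1 : R) ^ k * ((n.choose k : ℕ) : R) * Qk (A + 1) (C + 1) k) := by
          rw [Finset.sum_sub_distrib]; abel
      _ = (∑ k ∈ Finset.range (n + 1 + 1), (-1 : R) ^ k * ((n.choose k : ℕ) : R) * Qk A C k)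
          - A * Ring.inverse C *
            ∑ k ∈ Finset.range (n + 1),
              (-1 : R) ^ k * ((n.choose k : ℕ) : R) * Qk (A + 1) (C + 1) k := by
          rw [← Finset.mul_sum, ← hre]
      _ = (∑ k ∈ Finset.range (n + 1), (-1 : R) ^ k * ((n.choose k : ℕ) : R) * Qk A C k)
          - A * Ring.inverse C * Gg (A + 1) (C + 1) n := by
          rw [Finset.sum_range_succ, ih2, Nat.choose_succ_self]
          simp only [Nat.cast_zero, mul_zero, zero_mul, add_zero]
      _ = Gg A C n - A * Ring.inverse C * Gg (A + 1) (C + 1) n := by rw [ih1]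
      _ = Gg A C (n + 1) := by
          have hM := lemM n A C (fun m hm => hC m (by omega))
          rw [mul_sub] at hM
          rw [Gg_succ' A C n, sub_mul, Ring.mul_inverse_cancel _ hv, sub_mul, one_mul]
          have hX : Gg A C n = Gg A (C + 1) n
              - (A * Ring.inverse C * Gg A (C + 1) n
                  - A * Ring.inverse C * Gg (A + 1) (C + 1) n) := by
            rw [← hM]; abel
          rw [hX]
          abel

lemma opr_neg (n : ℕ) : ∀ k, k ≤ n →
    opr k (fun j => -(n : R) + (j : R)) = (-1 : R) ^ k * ((n.descFactorial k : ℕ) : R)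
  | 0, _ => by simp [opr_zero]
  | (k + 1), hk => by
    have hcast : -(n : R) + (k : R) = -(((n - k : ℕ)) : R) := by
      rw [Nat.cast_sub (show k ≤ n by omega)]; abel
    calc opr (k + 1) (fun j => -(n : R) + (j : R))
        = ((-1 : R) ^ k * ((n.descFactorial k : ℕ) : R)) * (-(n : R) + (k : R)) := by
          rw [opr_succ, opr_neg n k (by omega)]
      _ = ((-1 : R) ^ k * ((n.descFactorial k : ℕ) : R)) * (-(((n - k : ℕ)) : R)) := by
          rw [hcast]
      _ = (-1 : R) ^ (k + 1) * ((n.descFactorial (k + 1) : ℕ) : R) := by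
          rw [Nat.descFactorial_succ, Nat.cast_mul, pow_succ]
          have c3 : ((n.descFactorial k : ℕ) : R) * (((n - k : ℕ)) : R)
              = (((n - k : ℕ)) : R) * ((n.descFactorial k : ℕ) : R) :=
            (Nat.cast_commute _ _).eq
          calc (-1 : R) ^ k * ((n.descFactorial k : ℕ) : R) * -(((n - k : ℕ)) : R)
              = -((-1 : R) ^ k * (((n.descFactorial k : ℕ) : R) * (((n - k : ℕ)) : R))) := by
                noncomm_ring
            _ = -((-1 : R) ^ k * ((((n - k : ℕ)) : R) * ((n.descFactorial k : ℕ) : R))) := by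
                rw [c3]
            _ = (-1 : R) ^ k * -1 * ((((n - k : ℕ)) : R) * ((n.descFactorial k : ℕ) : R)) := by
                noncomm_ring

lemma fac_unit (n : ℕ) (hI : ∀ m : ℕ, m < n → IsUnit ((1 : R) + (m : R))) :
    ∀ k, k ≤ n → IsUnit (((Nat.factorial k : ℕ)) : R)
  | 0, _ => by simp
  | (k + 1), hk => by
    have h1 : IsUnit ((1 : R) + (k : R)) := hI k (by omega)
    have h2 : IsUnit (((Nat.factorial k : ℕ)) : R) := fac_unit n hI k (by omega)
    rw [Nat.factorial_succ, Nat.cast_mul]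
    have e : (((k + 1 : ℕ)) : R) = (1 : R) + (k : R) := by push_cast; rw [add_comm]
    rw [e]
    exact h1.mul h2

lemma opr_invfac (n : ℕ) (hI : ∀ m : ℕ, m < n → IsUnit ((1 : R) + (m : R))) :
    ∀ k, k ≤ n → opr k (fun j => Ring.inverse ((1 : R) + (j : R))) = Ring.inverse ((Nat.factorial k : ℕ) : R)
  | 0, _ => by simp [opr_zero]
  | (k + 1), hk => by
    have h1 : IsUnit ((1 : R) + (k : R)) := hI k (by omega)
    have h2 : IsUnit (((Nat.factorial k : ℕ)) : R) := fac_unit n hI k (by omega)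
    rw [opr_succ, opr_invfac n hI k (by omega), Nat.factorial_succ, Nat.cast_mul]
    have e : (((k + 1 : ℕ)) : R) = (1 : R) + (k : R) := by push_cast; rw [add_comm]
    rw [e, inverse_mul_of_units h1 h2]

lemma opr_scalar (n : ℕ) (hI : ∀ m : ℕ, m < n → IsUnit ((1 : R) + (m : R)))
    (k : ℕ) (hk : k ≤ n) :
    opr k (fun j => (-(n : R) + (j : R)) * Ring.inverse ((1 : R) + (j : R)))
      = (-1 : R) ^ k * (n.choose k : R) := by
  have hcent : ∀ (j : ℕ) (x : R), Commute x (Ring.inverse ((1 : R) + (j : R))) := fun j x =>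
    commute_ringInverse ((Commute.one_right x).add_right (Nat.cast_commute j x).symm)
  have hfac : IsUnit (((Nat.factorial k : ℕ)) : R) := fac_unit n hI k hk
  calc opr k (fun j => (-(n : R) + (j : R)) * Ring.inverse ((1 : R) + (j : R)))
      = opr k (fun j => -(n : R) + (j : R)) * opr k (fun j => Ring.inverse ((1 : R) + (j : R))) :=
        opr_mul_split _ _ hcent k
    _ = ((-1 : R) ^ k * ((n.descFactorial k : ℕ) : R)) * Ring.inverse ((Nat.factorial k : ℕ) : R) := by
        rw [opr_neg n k hk, opr_invfac n hI k hk]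
    _ = (-1 : R) ^ k * (((Nat.factorial k) : R) * ((n.choose k : ℕ) : R)) * Ring.inverse ((Nat.factorial k : ℕ) : R) := by
        rw [Nat.descFactorial_eq_factorial_mul_choose, Nat.cast_mul]
    _ = (-1 : R) ^ k * (((n.choose k : ℕ) : R) * ((Nat.factorial k) : R)) * Ring.inverse ((Nat.factorial k : ℕ) : R) := by
        rw [(Nat.cast_commute (Nat.factorial k) (((n.choose k : ℕ)) : R)).eq]
    _ = (-1 : R) ^ k * ((n.choose k : ℕ) : R) * (((Nat.factorial k) : R) * Ring.inverse ((Nat.factorial k : ℕ) : R)) := by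
        noncomm_ring
    _ = (-1 : R) ^ k * ((n.choose k : ℕ) : R) * 1 := by
        rw [Ring.mul_inverse_cancel _ hfac]
    _ = (-1 : R) ^ k * ((n.choose k : ℕ) : R) := mul_one _

end NCChuAux

open NCChuAux in
/-- Reversed noncommutative Chu–Vandermonde summation:
`₂F₁~⌈A, −nI; C; I⌋ = ~⌈C−A; C⌋_n`. -/
theorem ncChuVandermondeReversed {R : Type*} [Ring R] (A C : R) (n : ℕ)
    (hC : ∀ m : ℕ, m < n → IsUnit (C + (m : R)))
    (hI : ∀ m : ℕ, m < n → IsUnit ((1 : R) + (m : R))) :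
    (∑ k ∈ Finset.range (n + 1),
      opr k (fun j =>
        (A + (j : R)) * Ring.inverse (C + (j : R)) *
        ((-(n : R) + (j : R)) * Ring.inverse ((1 : R) + (j : R))))) =
    opr n (fun j => (C - A + (j : R)) * Ring.inverse (C + (j : R))) := by
  have hterm : ∀ k ∈ Finset.range (n + 1),
      opr k (fun j =>
        (A + (j : R)) * Ring.inverse (C + (j : R)) *
        ((-(n : R) + (j : R)) * Ring.inverse ((1 : R) + (j : R))))
        = (-1 : R) ^ k * (n.choose k : R) * Qk A C k := by
    intro k hk
    have hk' : k ≤ n := by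
      have := Finset.mem_range.mp hk; omega
    have hcent : ∀ (j : ℕ) (x : R),
        Commute x ((-(n : R) + (j : R)) * Ring.inverse ((1 : R) + (j : R))) := fun j x =>
      (((Nat.cast_commute n x).symm.neg_right).add_right (Nat.cast_commute j x).symm).mul_right
        (commute_ringInverse ((Commute.one_right x).add_right (Nat.cast_commute j x).symm))
    calc opr k (fun j =>
          (A + (j : R)) * Ring.inverse (C + (j : R)) *
          ((-(n : R) + (j : R)) * Ring.inverse ((1 : R) + (j : R))))
        = opr k (fun j => (A + (j : R)) * Ring.inverse (C + (j : R)))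
            * opr k (fun j => (-(n : R) + (j : R)) * Ring.inverse ((1 : R) + (j : R))) :=
          opr_mul_split _ _ hcent k
      _ = Qk A C k * ((-1 : R) ^ k * (n.choose k : R)) := by
          rw [opr_scalar n hI k hk']; rfl
      _ = (-1 : R) ^ k * (n.choose k : R) * Qk A C k :=
          (scomm k (n.choose k) (Qk A C k)).eq
  calc (∑ k ∈ Finset.range (n + 1),
        opr k (fun j =>
          (A + (j : R)) * Ring.inverse (C + (j : R)) *
          ((-(n : R) + (j : R)) * Ring.inverse ((1 : R) + (j : R)))))
      = ∑ k ∈ Finset.range (n + 1), (-1 : R) ^ k * (n.choose k : R) * Qk A C k :=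
        Finset.sum_congr rfl hterm
    _ = Gg A C n := mainlem n A C hC
    _ = opr n (fun j => (C - A + (j : R)) * Ring.inverse (C + (j : R))) := rfl
end
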